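/- arXiv:1412.8663 — 6 statements merged into one kernel-verified Lean document; each statement's English description precedes it below -/
import Mathlib

section
/- Let 1 < p, q < ∞ with 1/p + 1/q = 1, let μ be a finite Borel measure on a measurable space Ω, let each φₙ : Ω → ℝ be measurable, and suppose C := sup_{x∈Ω} ∑ₙ |φₙ(x)|^q < ∞. Then for every a ∈ ℓp the function f_a is defined at every point of Ω, is measurable, belongs to L_q(μ), and satisfies ‖f_a‖_{L_q(μ)} ≤ (C · μ(Ω))^{1/q} · ‖a‖_{ℓp}. (The p-norm space B_K^p(Ω) is imbedded into L_q(Ω) by the identity map.) -/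
/-!
Hölder's inequality for series bounds `|f_a(x)|` uniformly by `‖a‖_{ℓp} · C^{1/q}`, and a
function bounded by `M` on a finite measure space has `L_q` norm at most `μ(Ω)^{1/q} · M`.
-/

open MeasureTheory

namespace Real

variable {ι : Type*} {p q : ℝ} {a b : ι → ℝ}

lemma summable_abs_mul_of_Lp_Lq (hpq : p.HolderConjugate q)
    (ha : Summable fun i => |a i| ^ p) (hb : Summable fun i => |b i| ^ q) :
    Summable fun i => |a i * b i| := by
  simpa only [abs_mul] using
    summable_mul_of_Lp_Lq_of_nonneg hpq (fun _ => abs_nonneg _) (fun _ => abs_nonneg _) ha hb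

lemma abs_tsum_mul_le_Lp_mul_Lq (hpq : p.HolderConjugate q)
    (ha : Summable fun i => |a i| ^ p) (hb : Summable fun i => |b i| ^ q) :
    |∑' i, a i * b i| ≤ (∑' i, |a i| ^ p) ^ (1 / p) * (∑' i, |b i| ^ q) ^ (1 / q) :=
  calc |∑' i, a i * b i| ≤ ∑' i, |a i * b i| := by
        simpa only [norm_eq_abs] using
          norm_tsum_le_tsum_norm (f := fun i => a i * b i) (summable_abs_mul_of_Lp_Lq hpq ha hb)
    _ = ∑' i, |a i| * |b i| := by simp only [abs_mul]
    _ ≤ _ := inner_le_Lp_mul_Lq_tsum_of_nonneg hpq (fun _ => abs_nonneg _)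
        (fun _ => abs_nonneg _) ha hb

end Real

lemma MeasureTheory.eLpNorm_ofReal_le_of_forall_norm_le {α E : Type*} [MeasurableSpace α]
    {μ : Measure α} [IsFiniteMeasure μ] [NormedAddCommGroup E] {f : α → E} {q M : ℝ}
    (hq : 0 ≤ q) (hf : ∀ x, ‖f x‖ ≤ M) :
    eLpNorm f (ENNReal.ofReal q) μ ≤ ENNReal.ofReal ((μ Set.univ).toReal ^ (1 / q) * M) := by
  refine (eLpNorm_le_of_ae_bound (Filter.Eventually.of_forall hf)).trans_eq ?_
  rw [ENNReal.toReal_ofReal hq, ENNReal.ofReal_mul (by positivity),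
    ← ENNReal.ofReal_rpow_of_nonneg ENNReal.toReal_nonneg (by positivity),
    ENNReal.ofReal_toReal (measure_ne_top μ _), one_div]

theorem stmt3_general {Ω : Type*} [MeasurableSpace Ω] (μ : Measure Ω) [IsFiniteMeasure μ]
    (p q : ℝ) (hp : 1 < p) (hpq : 1 / p + 1 / q = 1)
    (φ : ℕ → Ω → ℝ) (hmeas : ∀ n, Measurable (φ n))
    (C : ℝ)
    (hsum : ∀ x : Ω, Summable fun n => |φ n x| ^ q)
    (hC : ∀ x : Ω, ∑' n, |φ n x| ^ q ≤ C) :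
    ∀ a : ℕ → ℝ, (Summable fun n => |a n| ^ p) →
      (∀ x : Ω, Summable fun n => |a n * φ n x|) ∧
      Measurable (fun x => ∑' n, a n * φ n x) ∧
      MemLp (fun x => ∑' n, a n * φ n x) (ENNReal.ofReal q) μ ∧
      eLpNorm (fun x => ∑' n, a n * φ n x) (ENNReal.ofReal q) μ ≤
        ENNReal.ofReal
          ((C * (μ Set.univ).toReal) ^ (1 / q) * (∑' n, |a n| ^ p) ^ (1 / p)) := by
  intro a ha
  have hpq' : p.HolderConjugate q :=
    Real.holderConjugate_iff.2 ⟨hp, by simpa only [one_div] using hpq⟩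
  have hq_inv : 0 ≤ 1 / q := one_div_nonneg.2 hpq'.symm.nonneg
  set A := (∑' n, |a n| ^ p) ^ (1 / p)
  have hmeas_f : Measurable fun x => ∑' n, a n * φ n x :=
    Measurable.tsum fun n => (hmeas n).const_mul (a n)
  have hbound : ∀ x, ‖∑' n, a n * φ n x‖ ≤ A * C ^ (1 / q) := fun x =>
    (Real.abs_tsum_mul_le_Lp_mul_Lq hpq' ha (hsum x)).trans <|
      mul_le_mul_of_nonneg_left
        (Real.rpow_le_rpow (tsum_nonneg fun _ => by positivity) (hC x) hq_inv)
        (Real.rpow_nonneg (tsum_nonneg fun _ => by positivity) _)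
  have hμC :
      (μ Set.univ).toReal ^ (1 / q) * C ^ (1 / q) = (C * (μ Set.univ).toReal) ^ (1 / q) := by
    -- `C` can be negative only when `Ω` is empty, and then `μ Set.univ = 0`.
    rcases isEmpty_or_nonempty Ω with hΩ | ⟨⟨x⟩⟩
    · simp [Set.univ_eq_empty_iff.2 hΩ, hpq'.symm.ne_zero]
    · rw [mul_comm, Real.mul_rpow ((tsum_nonneg fun _ => by positivity).trans (hC x))
        ENNReal.toReal_nonneg]
  refine ⟨fun x => Real.summable_abs_mul_of_Lp_Lq hpq' ha (hsum x), hmeas_f,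
    .of_bound hmeas_f.aestronglyMeasurable _ (Filter.Eventually.of_forall hbound), ?_⟩
  refine (eLpNorm_ofReal_le_of_forall_norm_le hpq'.symm.nonneg hbound).trans_eq ?_
  rw [← hμC]
  congr 1
  ring

/-- **Imbedding of the p-norm space `B_K^p(Ω)` into `L_q(Ω)` by the identity map.**
Let `1 < p, q < ∞` with `1/p + 1/q = 1`, let `μ` be a finite Borel measure on `Ω`,
let each `φₙ` be measurable, and suppose `C := sup_x ∑ₙ |φₙ x|^q < ∞`. Then for
every `a ∈ ℓp` the function `f_a(x) = ∑ₙ aₙ φₙ(x)` is defined at every point,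
measurable, belongs to `L_q(μ)`, and
`‖f_a‖_{L_q(μ)} ≤ (C · μ(Ω))^{1/q} ‖a‖_{ℓp}`. -/
theorem stmt3 {Ω : Type*} [MeasurableSpace Ω] (μ : Measure Ω) [IsFiniteMeasure μ]
    (p q : ℝ) (hp : 1 < p) (hq : 1 < q) (hpq : 1 / p + 1 / q = 1)
    (φ : ℕ → Ω → ℝ) (hmeas : ∀ n, Measurable (φ n))
    (C : ℝ)
    (hsum : ∀ x : Ω, Summable fun n => |φ n x| ^ q)
    (hC : ∀ x : Ω, ∑' n, |φ n x| ^ q ≤ C) :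
    ∀ a : ℕ → ℝ, (Summable fun n => |a n| ^ p) →
      (∀ x : Ω, Summable fun n => |a n * φ n x|) ∧
      Measurable (fun x => ∑' n, a n * φ n x) ∧
      MemLp (fun x => ∑' n, a n * φ n x) (ENNReal.ofReal q) μ ∧
      eLpNorm (fun x => ∑' n, a n * φ n x) (ENNReal.ofReal q) μ ≤
        ENNReal.ofReal
          ((C * (μ Set.univ).toReal) ^ (1 / q) * (∑' n, |a n| ^ p) ^ (1 / p)) :=
  stmt3_general μ p q hp hpq φ hmeas C hsum hC
end

section
/- Let 1 < p, q < ∞ with 1/p + 1/q = 1, let φₙ : Ω → ℝ and φ'ₙ : Ω' → ℝ satisfy condition (C-p), let μ' be a finite Borel measure on Ω' with each φ'ₙ measurable, and suppose C' := sup_{y∈Ω'} ∑ₙ |φ'ₙ(y)|^p < ∞. Then for every ξ ∈ L_q(μ'): (i) the sequence c = (cₙ) defined by cₙ := ∫_{Ω'} φ'ₙ(y)ξ(y) dμ'(y) belongs to ℓp and ‖c‖_{ℓp} ≤ (C'·μ'(Ω'))^{1/p} ‖ξ‖_{L_q(μ')}; (ii) for every x ∈ Ω, ∫_{Ω'} K(x,y)ξ(y)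 dμ'(y) = ∑ₙ cₙφₙ(x) = f_c(x); (iii) for every b ∈ ℓq, ∫_{Ω'} g_b(y)ξ(y) dμ'(y) = ∑ₙ bₙcₙ, where g_b(y) := ∑ₙ bₙφ'ₙ(y). (The integral operator of the adjoint kernel maps L_q(Ω') into the p-norm space B_K^p(Ω) continuously and realizes the duality pairing.) -/
/-!
By Hölder's inequality each coefficient satisfies `|cₙ| ≤ ‖φ'ₙ‖_p ‖ξ‖_q`, and integrating the
pointwise bound `∑ₙ |φ'ₙ|^p ≤ C'` gives `∑ₙ ‖φ'ₙ‖_p^p ≤ C' μ'(Ω')`; together they give (i).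
For (ii) and (iii), Hölder's inequality for sequences makes `∑ₙ |bₙ| ‖φ'ₙ‖_p ‖ξ‖_q` finite;
it dominates `∑ₙ ∫ |bₙ φ'ₙ ξ|`, which justifies exchanging sum and integral, and (ii) is the
case `bₙ = φₙ(x)`.
-/

open MeasureTheory

section

variable {α ι : Type*} [MeasurableSpace α] {μ : Measure α} {p q : ℝ}

theorem lpNorm_ofReal_rpow {E : Type*} [NormedAddCommGroup E] {f : α → E}
    (hp : 0 < p) (hf : AEStronglyMeasurable f μ) :
    lpNorm f (ENNReal.ofReal p) μ ^ p = ∫ a, ‖f a‖ ^ p ∂μ := by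
  rw [lpNorm_eq_integral_norm_rpow_toReal (by simpa using hp) ENNReal.ofReal_ne_top hf,
    ENNReal.toReal_ofReal hp.le,
    Real.rpow_inv_rpow (integral_nonneg fun a => by positivity) hp.ne']

theorem integral_norm_mul_norm_le_lpNorm_mul_lpNorm {E : Type*} [NormedAddCommGroup E]
    {f g : α → E} (hpq : p.HolderConjugate q)
    (hf : MemLp f (ENNReal.ofReal p) μ) (hg : MemLp g (ENNReal.ofReal q) μ) :
    ∫ a, ‖f a‖ * ‖g a‖ ∂μ ≤ lpNorm f (ENNReal.ofReal p) μ * lpNorm g (ENNReal.ofReal q) μ := by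
  have hp := hpq.pos
  have hq := hpq.symm.pos
  rw [lpNorm_eq_integral_norm_rpow_toReal (by simpa using hp) ENNReal.ofReal_ne_top hf.1,
    lpNorm_eq_integral_norm_rpow_toReal (by simpa using hq) ENNReal.ofReal_ne_top hg.1,
    ENNReal.toReal_ofReal hp.le, ENNReal.toReal_ofReal hq.le, ← one_div, ← one_div]
  exact integral_mul_norm_le_Lp_mul_Lq hpq hf hg

theorem abs_integral_mul_rpow_le {f g : α → ℝ} (hpq : p.HolderConjugate q)
    (hf : MemLp f (ENNReal.ofReal p) μ) (hg : MemLp g (ENNReal.ofReal q) μ) :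
    |∫ a, f a * g a ∂μ| ^ p ≤
      lpNorm f (ENNReal.ofReal p) μ ^ p * lpNorm g (ENNReal.ofReal q) μ ^ p := by
  have habs :
      |∫ a, f a * g a ∂μ| ≤ lpNorm f (ENNReal.ofReal p) μ * lpNorm g (ENNReal.ofReal q) μ :=
    calc |∫ a, f a * g a ∂μ| ≤ ∫ a, ‖f a‖ * ‖g a‖ ∂μ := by
          simpa only [Real.norm_eq_abs, abs_mul] using
            norm_integral_le_integral_norm (μ := μ) fun a => f a * g a
      _ ≤ _ := integral_norm_mul_norm_le_lpNorm_mul_lpNorm hpq hf hg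
  rw [← Real.mul_rpow lpNorm_nonneg lpNorm_nonneg]
  exact Real.rpow_le_rpow (abs_nonneg _) habs hpq.nonneg

theorem summable_integral_and_tsum_integral_le [IsFiniteMeasure μ] {F : ι → α → ℝ} {C : ℝ}
    (hF₀ : ∀ i a, 0 ≤ F i a) (hF : ∀ i, Integrable (F i) μ)
    (hsum : ∀ a, Summable fun i => F i a) (hC : ∀ a, ∑' i, F i a ≤ C) :
    (Summable fun i => ∫ a, F i a ∂μ) ∧ ∑' i, ∫ a, F i a ∂μ ≤ C * μ.real Set.univ := by
  have hnonneg : 0 ≤ fun i => ∫ a, F i a ∂μ := fun i => integral_nonneg (hF₀ i)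
  have hpartial (s : Finset ι) : ∑ i ∈ s, ∫ a, F i a ∂μ ≤ C * μ.real Set.univ := by
    rw [← integral_finsetSum s fun i _ => hF i, mul_comm, ← smul_eq_mul, ← integral_const]
    exact integral_mono (integrable_finsetSum s fun i _ => hF i) (integrable_const C)
      fun a => ((hsum a).sum_le_tsum s fun i _ => hF₀ i a).trans (hC a)
  exact ⟨summable_of_sum_le hnonneg hpartial, Real.tsum_le_of_sum_le hnonneg hpartial⟩

variable {f : ι → α → ℝ} {g : α → ℝ}

theorem summable_abs_integral_mul_rpow (hpq : p.HolderConjugate q)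
    (hf : ∀ i, MemLp (f i) (ENNReal.ofReal p) μ)
    (hfs : Summable fun i => lpNorm (f i) (ENNReal.ofReal p) μ ^ p)
    (hg : MemLp g (ENNReal.ofReal q) μ) :
    Summable fun i => |∫ a, f i a * g a ∂μ| ^ p :=
  (hfs.mul_right _).of_nonneg_of_le (fun _ => by positivity)
    fun i => abs_integral_mul_rpow_le hpq (hf i) hg

theorem tsum_abs_integral_mul_rpow_rpow_inv_le (hpq : p.HolderConjugate q)
    (hf : ∀ i, MemLp (f i) (ENNReal.ofReal p) μ)
    (hfs : Summable fun i => lpNorm (f i) (ENNReal.ofReal p) μ ^ p) {A : ℝ}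
    (hA : ∑' i, lpNorm (f i) (ENNReal.ofReal p) μ ^ p ≤ A)
    (hg : MemLp g (ENNReal.ofReal q) μ) :
    (∑' i, |∫ a, f i a * g a ∂μ| ^ p) ^ (1 / p) ≤
      A ^ (1 / p) * lpNorm g (ENNReal.ofReal q) μ := by
  have hp := hpq.pos
  have hgp : 0 ≤ lpNorm g (ENNReal.ofReal q) μ ^ p := Real.rpow_nonneg lpNorm_nonneg p
  have hA₀ : 0 ≤ A := (tsum_nonneg fun i => Real.rpow_nonneg lpNorm_nonneg p).trans hA
  have hle : ∑' i, |∫ a, f i a * g a ∂μ| ^ p ≤ A * lpNorm g (ENNReal.ofReal q) μ ^ p := by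
    calc ∑' i, |∫ a, f i a * g a ∂μ| ^ p
        ≤ ∑' i, lpNorm (f i) (ENNReal.ofReal p) μ ^ p * lpNorm g (ENNReal.ofReal q) μ ^ p :=
          (summable_abs_integral_mul_rpow hpq hf hfs hg).tsum_le_tsum
            (fun i => abs_integral_mul_rpow_le hpq (hf i) hg) (hfs.mul_right _)
      _ ≤ A * lpNorm g (ENNReal.ofReal q) μ ^ p := by
          rw [tsum_mul_right]
          exact mul_le_mul_of_nonneg_right hA hgp
  calc (∑' i, |∫ a, f i a * g a ∂μ| ^ p) ^ (1 / p)
      ≤ (A * lpNorm g (ENNReal.ofReal q) μ ^ p) ^ (1 / p) := by gcongr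
    _ = A ^ (1 / p) * lpNorm g (ENNReal.ofReal q) μ := by
        rw [Real.mul_rpow hA₀ hgp, one_div, Real.rpow_rpow_inv lpNorm_nonneg hpq.ne_zero]

theorem integral_tsum_mul_eq_tsum_mul_integral [Countable ι] (hpq : p.HolderConjugate q)
    (hf : ∀ i, MemLp (f i) (ENNReal.ofReal p) μ)
    (hfs : Summable fun i => lpNorm (f i) (ENNReal.ofReal p) μ ^ p)
    (hg : MemLp g (ENNReal.ofReal q) μ) {b : ι → ℝ} (hb : Summable fun i => |b i| ^ q) :
    ∫ a, (∑' i, b i * f i a) * g a ∂μ = ∑' i, b i * ∫ a, f i a * g a ∂μ := by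
  have := hpq.ennrealOfReal
  have hint (i : ι) : Integrable (fun a => b i * (f i a * g a)) μ :=
    ((hf i).integrable_mul hg).const_mul (b i)
  have hnorm (i : ι) : ∫ a, ‖b i * (f i a * g a)‖ ∂μ ≤
      (|b i| * lpNorm (f i) (ENNReal.ofReal p) μ) * lpNorm g (ENNReal.ofReal q) μ := by
    simp only [norm_mul, Real.norm_eq_abs, integral_const_mul, mul_assoc]
    exact mul_le_mul_of_nonneg_left
      (integral_norm_mul_norm_le_lpNorm_mul_lpNorm hpq (hf i) hg) (abs_nonneg _)
  have hsum : Summable fun i => ∫ a, ‖b i * (f i a * g a)‖ ∂μ :=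
    ((Real.summable_mul_of_Lp_Lq_of_nonneg hpq.symm (fun i => abs_nonneg (b i))
      (fun i => lpNorm_nonneg) hb hfs).mul_right _).of_nonneg_of_le
      (fun i => integral_nonneg fun a => norm_nonneg _) hnorm
  calc ∫ a, (∑' i, b i * f i a) * g a ∂μ = ∫ a, ∑' i, b i * (f i a * g a) ∂μ := by
        simp only [← mul_assoc, tsum_mul_right]
    _ = ∑' i, ∫ a, b i * (f i a * g a) ∂μ :=
        (integral_tsum_of_summable_integral_norm hint hsum).symm
    _ = ∑' i, b i * ∫ a, f i a * g a ∂μ := by simp only [integral_const_mul]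

end

theorem stmt4_general {Ω Ω' : Type*} [MeasurableSpace Ω'] (μ' : Measure Ω')
    [IsFiniteMeasure μ']
    (p q : ℝ) (hp : 1 < p) (hpq : 1 / p + 1 / q = 1)
    (φ : ℕ → Ω → ℝ) (φ' : ℕ → Ω' → ℝ)
    (hCp₁ : ∀ x : Ω, Summable fun n => |φ n x| ^ q)
    (hCp₂ : ∀ y : Ω', Summable fun n => |φ' n y| ^ p)
    (hmeas : ∀ n, Measurable (φ' n))
    (C' : ℝ) (hC' : ∀ y : Ω', ∑' n, |φ' n y| ^ p ≤ C') :
    ∀ ξ : Ω' → ℝ, MemLp ξ (ENNReal.ofReal q) μ' →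
      -- (i) the coefficient sequence belongs to ℓp with the norm bound
      (Summable fun n => |∫ y, φ' n y * ξ y ∂μ'| ^ p) ∧
      (∑' n, |∫ y, φ' n y * ξ y ∂μ'| ^ p) ^ (1 / p) ≤
        (C' * (μ' Set.univ).toReal) ^ (1 / p) *
          (eLpNorm ξ (ENNReal.ofReal q) μ').toReal ∧
      -- (ii) the integral operator of the adjoint kernel
      (∀ x : Ω,
        ∫ y, (∑' n, φ n x * φ' n y) * ξ y ∂μ' =
          ∑' n, (∫ y, φ' n y * ξ y ∂μ') * φ n x) ∧
      -- (iii) the duality pairing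
      (∀ b : ℕ → ℝ, (Summable fun n => |b n| ^ q) →
        ∫ y, (∑' n, b n * φ' n y) * ξ y ∂μ' =
          ∑' n, b n * (∫ y, φ' n y * ξ y ∂μ')) := by
  intro ξ hξ
  have hpq' : p.HolderConjugate q :=
    Real.holderConjugate_iff.2 ⟨hp, by simpa only [one_div] using hpq⟩
  have hbound (n : ℕ) (y : Ω') : |φ' n y| ^ p ≤ C' :=
    ((hCp₂ y).le_tsum n fun m _ => by positivity).trans (hC' y)
  have hint (n : ℕ) : Integrable (fun y => |φ' n y| ^ p) μ' :=
    .of_bound (((hmeas n).abs.pow_const p).aestronglyMeasurable) C'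
      (.of_forall fun y => by rw [Real.norm_of_nonneg (by positivity)]; exact hbound n y)
  have hLp (n : ℕ) : MemLp (φ' n) (ENNReal.ofReal p) μ' := by
    rw [← integrable_norm_rpow_iff (hmeas n).aestronglyMeasurable
      (ENNReal.ofReal_pos.2 hpq'.pos).ne' ENNReal.ofReal_ne_top, ENNReal.toReal_ofReal hpq'.nonneg]
    exact hint n
  have hrpow (n : ℕ) : lpNorm (φ' n) (ENNReal.ofReal p) μ' ^ p = ∫ y, |φ' n y| ^ p ∂μ' :=
    lpNorm_ofReal_rpow hpq'.pos (hmeas n).aestronglyMeasurable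
  obtain ⟨hsum, htsum⟩ := summable_integral_and_tsum_integral_le
    (fun n y => by positivity) hint hCp₂ hC'
  simp only [← hrpow] at hsum htsum
  have hpair (b : ℕ → ℝ) (hb : Summable fun n => |b n| ^ q) :
      ∫ y, (∑' n, b n * φ' n y) * ξ y ∂μ' = ∑' n, b n * ∫ y, φ' n y * ξ y ∂μ' :=
    integral_tsum_mul_eq_tsum_mul_integral hpq' hLp hsum hξ hb
  refine ⟨summable_abs_integral_mul_rpow hpq' hLp hsum hξ, ?_, fun x => ?_, hpair⟩
  · rw [toReal_eLpNorm hξ.1]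
    exact tsum_abs_integral_mul_rpow_rpow_inv_le hpq' hLp hsum htsum hξ
  · rw [hpair (fun n => φ n x) (hCp₁ x)]
    exact tsum_congr fun n => mul_comm _ _

/-- **The integral operator of the adjoint kernel maps `L_q(Ω')` continuously into
the p-norm space `B_K^p(Ω)` and realizes the duality pairing.**
Under condition (C-p), with `μ'` a finite measure and
`C' := sup_y ∑ₙ |φ'ₙ y|^p < ∞`, for every `ξ ∈ L_q(μ')`: (i) the coefficient
sequence `cₙ := ∫ φ'ₙ(y) ξ(y) dμ'(y)` lies in `ℓp` with
`‖c‖_{ℓp} ≤ (C' μ'(Ω'))^{1/p} ‖ξ‖_{L_q}`; (ii) `∫ K(x,y) ξ(y) dμ'(y) = ∑ₙ cₙ φₙ(x)`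
for every `x`; (iii) `∫ g_b(y) ξ(y) dμ'(y) = ∑ₙ bₙ cₙ` for every `b ∈ ℓq`. -/
theorem stmt4 {Ω Ω' : Type*} [MeasurableSpace Ω'] (μ' : Measure Ω')
    [IsFiniteMeasure μ']
    (p q : ℝ) (hp : 1 < p) (hq : 1 < q) (hpq : 1 / p + 1 / q = 1)
    (φ : ℕ → Ω → ℝ) (φ' : ℕ → Ω' → ℝ)
    (hCp₁ : ∀ x : Ω, Summable fun n => |φ n x| ^ q)
    (hCp₂ : ∀ y : Ω', Summable fun n => |φ' n y| ^ p)
    (hmeas : ∀ n, Measurable (φ' n))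
    (C' : ℝ) (hC' : ∀ y : Ω', ∑' n, |φ' n y| ^ p ≤ C') :
    ∀ ξ : Ω' → ℝ, MemLp ξ (ENNReal.ofReal q) μ' →
      -- (i) the coefficient sequence belongs to ℓp with the norm bound
      (Summable fun n => |∫ y, φ' n y * ξ y ∂μ'| ^ p) ∧
      (∑' n, |∫ y, φ' n y * ξ y ∂μ'| ^ p) ^ (1 / p) ≤
        (C' * (μ' Set.univ).toReal) ^ (1 / p) *
          (eLpNorm ξ (ENNReal.ofReal q) μ').toReal ∧
      -- (ii) the integral operator of the adjoint kernel
      (∀ x : Ω,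
        ∫ y, (∑' n, φ n x * φ' n y) * ξ y ∂μ' =
          ∑' n, (∫ y, φ' n y * ξ y ∂μ') * φ n x) ∧
      -- (iii) the duality pairing
      (∀ b : ℕ → ℝ, (Summable fun n => |b n| ^ q) →
        ∫ y, (∑' n, b n * φ' n y) * ξ y ∂μ' =
          ∑' n, b n * (∫ y, φ' n y * ξ y ∂μ')) :=
  stmt4_general μ' p q hp hpq φ φ' hCp₁ hCp₂ hmeas C' hC'
end

section
/- Let 1 < p, q < ∞ with 1/p + 1/q = 1 and suppose φₙ : Ω → ℝ satisfies ∑ₙ|φₙ(x)|^q < ∞ for every x ∈ Ω. If the left-sided sequence set A := {(φₙ(x))ₙ : x ∈ Ω} is a compact subset of ℓq, then every function f_a with a ∈ ℓp and ‖a‖_{ℓp} ≤ 1 is bounded on Ω, and the set {f_a : a ∈ ℓp, ‖a‖_{ℓp} ≤ 1} is totally bounded with respect to the supremum metric on bounded real-valued functions on Ω; that is, the identity map from the unit ball of the p-norm space B_K^p(Ω) into ℓ∞(Ω) has relatively compact image. -/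
/-!
Each `f_a` is the pairing `⟨a, Φ x⟩` of `a` with the point `Φ x = (φₙ(x))ₙ` of the compact
set `A ⊆ ℓq`. By Hölder these pairings are bounded by `sup_A ‖·‖` and are 1-Lipschitz in
`Φ x`, uniformly over the unit ball of `ℓp`. A uniformly bounded, equi-Lipschitz family is
determined up to `ε` by its values on a finite net of `A`, and those value vectors range
over a compact box in a finite-dimensional space, so finitely many functions suffice.
-/

open Set Metric
open scoped NNReal ENNReal

theorem memℓp_ofReal_of_summable_abs_rpow {α : Type*} {p : ℝ} (hp : 0 ≤ p) {a : α → ℝ}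
    (ha : Summable fun i => |a i| ^ p) : Memℓp a (ENNReal.ofReal p) :=
  memℓp_gen <| by simpa only [ENNReal.toReal_ofReal hp, Real.norm_eq_abs] using ha

namespace lp

theorem norm_mk_ofReal {α : Type*} {p : ℝ} [Fact (1 ≤ ENNReal.ofReal p)] (hp : 0 < p) {a : α → ℝ}
    (ha : Memℓp a (ENNReal.ofReal p)) :
    ‖(⟨a, ha⟩ : lp (fun _ : α => ℝ) (ENNReal.ofReal p))‖ = (∑' i, |a i| ^ p) ^ (1 / p) := by
  rw [norm_eq_tsum_rpow (by rwa [ENNReal.toReal_ofReal hp.le])]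
  simp only [ENNReal.toReal_ofReal hp.le, Real.norm_eq_abs]

variable {α : Type*} {p q : ℝ≥0∞}

theorem summable_mul_real (hpq : p.toReal.HolderConjugate q.toReal)
    (f : lp (fun _ : α => ℝ) p) (g : lp (fun _ : α => ℝ) q) :
    Summable fun i => f i * g i :=
  Summable.of_norm <| by simpa only [norm_mul] using lp.summable_mul hpq f g

theorem abs_tsum_mul_le (hpq : p.toReal.HolderConjugate q.toReal)
    (f : lp (fun _ : α => ℝ) p) (g : lp (fun _ : α => ℝ) q) :
    |∑' i, f i * g i| ≤ ‖f‖ * ‖g‖ := by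
  have hsum : Summable fun i => ‖f i * g i‖ := by
    simpa only [norm_mul] using lp.summable_mul hpq f g
  calc |∑' i, f i * g i| ≤ ∑' i, ‖f i * g i‖ := norm_tsum_le_tsum_norm hsum
    _ ≤ ‖f‖ * ‖g‖ := by simpa only [norm_mul] using lp.tsum_mul_le_mul_norm' hpq f g

theorem lipschitzWith_tsum_mul [Fact (1 ≤ p)] [Fact (1 ≤ q)]
    (hpq : p.toReal.HolderConjugate q.toReal) (f : lp (fun _ : α => ℝ) p) :
    LipschitzWith ‖f‖₊ fun g : lp (fun _ : α => ℝ) q => ∑' i, f i * g i :=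
  LipschitzWith.of_dist_le_mul fun g g' => by
    rw [Real.dist_eq, dist_eq_norm, coe_nnnorm,
      ← (summable_mul_real hpq f g).tsum_sub (summable_mul_real hpq f g')]
    simpa only [coeFn_sub, Pi.sub_apply, mul_sub] using abs_tsum_mul_le hpq f (g - g')

end lp

theorem exists_finite_uniform_approx_of_totallyBounded_range {Ω X ι : Type*}
    [PseudoMetricSpace X] {Φ : Ω → X} (hΦ : TotallyBounded (range Φ)) {f : ι → X → ℝ}
    {K : ℝ≥0} {M : ℝ} (hf : ∀ i, LipschitzOnWith K (f i) (range Φ))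
    (hM : ∀ i x, |f i (Φ x)| ≤ M) {ε : ℝ} (hε : 0 < ε) :
    ∃ G : Set (Ω → ℝ), G.Finite ∧ ∀ i, ∃ g ∈ G, ∀ x, |f i (Φ x) - g x| ≤ ε := by
  obtain ⟨δ, hδ, hKδ⟩ := exists_pos_mul_lt (half_pos hε) (K : ℝ)
  obtain ⟨t, htΦ, ht, hcover⟩ := finite_approx_of_totallyBounded hΦ δ hδ
  have : Fintype t := ht.fintype
  have hnear : ∀ x, ∃ y : t, dist (Φ x) y < δ := fun x => by
    simpa using hcover (mem_range_self x)
  choose c hc using hnear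
  -- `f i` is determined up to `ε / 2` by its values on the finite net `t`, which lie in a box.
  obtain ⟨W, -, hW, hWcover⟩ := finite_approx_of_totallyBounded
    (isCompact_univ_pi fun _ : t => isCompact_Icc (a := -M) (b := M)).totallyBounded
    (ε / 2) (half_pos hε)
  refine ⟨(fun w x => w (c x)) '' W, hW.image _, fun i => ?_⟩
  have hbox : (fun y : t => f i y) ∈ univ.pi fun _ => Icc (-M) M := fun y _ => by
    obtain ⟨x, hx⟩ := htΦ y.2
    simpa only [← hx, mem_Icc] using abs_le.1 (hM i x)
  obtain ⟨w, hw, hdist⟩ : ∃ w ∈ W, dist (fun y : t => f i y) w < ε / 2 := by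
    simpa using hWcover hbox
  refine ⟨_, mem_image_of_mem _ hw, fun x => ?_⟩
  calc |f i (Φ x) - w (c x)| ≤ |f i (Φ x) - f i (c x)| + |f i (c x) - w (c x)| :=
        abs_sub_le _ _ _
    _ ≤ K * δ + ε / 2 := by
        gcongr
        · calc |f i (Φ x) - f i (c x)| ≤ K * dist (Φ x) (c x) :=
                (hf i).dist_le_mul _ (mem_range_self x) _ (htΦ (c x).2)
            _ ≤ K * δ := by gcongr; exact (hc x).le
        · exact (dist_le_pi_dist (fun y : t => f i y) w (c x)).trans hdist.le
    _ ≤ ε := by linarith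

theorem stmt5_general {Ω : Type*} (p q : ℝ) (hp : 1 < p)
    (hpq : 1 / p + 1 / q = 1)
    (φ : ℕ → Ω → ℝ) [Fact (1 ≤ ENNReal.ofReal q)]
    (hCq : ∀ x : Ω, Summable fun n => |φ n x| ^ q)
    (hcompact : IsCompact
      {f : lp (fun _ : ℕ => ℝ) (ENNReal.ofReal q) | ∃ x : Ω, ∀ n, f n = φ n x}) :
    -- every f_a in the unit ball of B_K^p(Ω) is bounded on Ω
    (∀ a : ℕ → ℝ, (Summable fun n => |a n| ^ p) →
      (∑' n, |a n| ^ p) ^ (1 / p) ≤ 1 →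
      ∃ M : ℝ, ∀ x : Ω, |∑' n, a n * φ n x| ≤ M) ∧
    -- the image of the unit ball is totally bounded for the sup metric on ℓ∞(Ω)
    (∀ ε : ℝ, 0 < ε →
      ∃ G : Set (Ω → ℝ), G.Finite ∧
        ∀ a : ℕ → ℝ, (Summable fun n => |a n| ^ p) →
          (∑' n, |a n| ^ p) ^ (1 / p) ≤ 1 →
          ∃ g ∈ G, ∀ x : Ω, |(∑' n, a n * φ n x) - g x| ≤ ε) := by
  have hpq' : p.HolderConjugate q := Real.holderConjugate_iff.2 ⟨hp, by simpa using hpq⟩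
  have : Fact (1 ≤ ENNReal.ofReal p) := ⟨ENNReal.one_le_ofReal.2 hp.le⟩
  have hHolder : (ENNReal.ofReal p).toReal.HolderConjugate (ENNReal.ofReal q).toReal := by
    rwa [ENNReal.toReal_ofReal hpq'.nonneg, ENNReal.toReal_ofReal hpq'.symm.nonneg]
  let Φ : Ω → lp (fun _ : ℕ => ℝ) (ENNReal.ofReal q) := fun x =>
    ⟨fun n => φ n x, memℓp_ofReal_of_summable_abs_rpow hpq'.symm.nonneg (hCq x)⟩
  have hΦ : range Φ ⊆ {f | ∃ x : Ω, ∀ n, f n = φ n x} :=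
    range_subset_iff.2 fun x => ⟨x, fun _ => rfl⟩
  obtain ⟨M, hM⟩ := hcompact.isBounded.exists_norm_le
  let ball := {A : lp (fun _ : ℕ => ℝ) (ENNReal.ofReal p) // ‖A‖ ≤ 1}
  let pairing (A : ball) (g : lp (fun _ : ℕ => ℝ) (ENNReal.ofReal q)) : ℝ := ∑' n, A.1 n * g n
  have hbound (A : ball) (x : Ω) : |pairing A (Φ x)| ≤ M :=
    (lp.abs_tsum_mul_le hHolder A.1 (Φ x)).trans <|
      (mul_le_of_le_one_left (norm_nonneg _) A.2).trans (hM _ (hΦ (mem_range_self x)))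
  have hball (a : ℕ → ℝ) (ha : Summable fun n => |a n| ^ p)
      (ha1 : (∑' n, |a n| ^ p) ^ (1 / p) ≤ 1) :
      ∃ A : ball, ∀ x, pairing A (Φ x) = ∑' n, a n * φ n x :=
    ⟨⟨⟨a, memℓp_ofReal_of_summable_abs_rpow hpq'.nonneg ha⟩,
      by rwa [lp.norm_mk_ofReal hpq'.pos]⟩, fun _ => rfl⟩
  refine ⟨fun a ha ha1 => ?_, fun ε hε => ?_⟩
  · obtain ⟨A, hA⟩ := hball a ha ha1
    exact ⟨M, fun x => hA x ▸ hbound A x⟩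
  · obtain ⟨G, hG, hGapprox⟩ := exists_finite_uniform_approx_of_totallyBounded_range
      (hcompact.totallyBounded.subset hΦ)
      (fun A : ball => ((lp.lipschitzWith_tsum_mul hHolder A.1).weaken
        (mod_cast A.2 : ‖A.1‖₊ ≤ 1)).lipschitzOnWith)
      hbound hε
    refine ⟨G, hG, fun a ha ha1 => ?_⟩
    obtain ⟨A, hA⟩ := hball a ha ha1
    obtain ⟨g, hg, hgA⟩ := hGapprox A
    exact ⟨g, hg, fun x => hA x ▸ hgA x⟩

/-- **Compactness of the imbedding of the unit ball of `B_K^p(Ω)` into `ℓ∞(Ω)`.**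
Let `1 < p, q < ∞` with `1/p + 1/q = 1`, and suppose `∑ₙ |φₙ x|^q < ∞` for every
`x ∈ Ω`. If the left-sided sequence set `A = {(φₙ x)ₙ : x ∈ Ω}` is compact in
`ℓq`, then every `f_a` with `a ∈ ℓp`, `‖a‖_{ℓp} ≤ 1` is bounded on `Ω`, and the
set `{f_a : ‖a‖_{ℓp} ≤ 1}` is totally bounded in the supremum metric: for every
`ε > 0` there is a finite ε-net. -/
theorem stmt5 {Ω : Type*} (p q : ℝ) (hp : 1 < p) (hq : 1 < q)
    (hpq : 1 / p + 1 / q = 1)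
    (φ : ℕ → Ω → ℝ) [Fact (1 ≤ ENNReal.ofReal q)]
    (hCq : ∀ x : Ω, Summable fun n => |φ n x| ^ q)
    (hcompact : IsCompact
      {f : lp (fun _ : ℕ => ℝ) (ENNReal.ofReal q) | ∃ x : Ω, ∀ n, f n = φ n x}) :
    -- every f_a in the unit ball of B_K^p(Ω) is bounded on Ω
    (∀ a : ℕ → ℝ, (Summable fun n => |a n| ^ p) →
      (∑' n, |a n| ^ p) ^ (1 / p) ≤ 1 →
      ∃ M : ℝ, ∀ x : Ω, |∑' n, a n * φ n x| ≤ M) ∧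
    -- the image of the unit ball is totally bounded for the sup metric on ℓ∞(Ω)
    (∀ ε : ℝ, 0 < ε →
      ∃ G : Set (Ω → ℝ), G.Finite ∧
        ∀ a : ℕ → ℝ, (Summable fun n => |a n| ^ p) →
          (∑' n, |a n| ^ p) ^ (1 / p) ≤ 1 →
          ∃ g ∈ G, ∀ x : Ω, |(∑' n, a n * φ n x) - g x| ≤ ε) :=
  stmt5_general p q hp hpq φ hCq hcompact
end

section
/- For all real numbers x, y with 0 ≤ x ≤ y ≤ 1, the integral-type min kernel satisfies ∫₀¹ (min{x,z} − xz)(min{y,z} − yz) dz = −x³/6 + x³y/6 + xy³/6 − xy²/2 + xy/3. -/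
/-- **Explicit form of the integral-type min kernel.** For `0 ≤ x ≤ y ≤ 1`,
`∫₀¹ (min{x,z} − xz)(min{y,z} − yz) dz
  = −x³/6 + x³y/6 + xy³/6 − xy²/2 + xy/3`. -/
theorem stmt10 (x y : ℝ) (hx : 0 ≤ x) (hxy : x ≤ y) (hy : y ≤ 1) :
    ∫ z in (0 : ℝ)..1, (min x z - x * z) * (min y z - y * z) =
      -x ^ 3 / 6 + x ^ 3 * y / 6 + x * y ^ 3 / 6 - x * y ^ 2 / 2 + x * y / 3 := by
  have hcont : Continuous fun z : ℝ => (min x z - x * z) * (min y z - y * z) := by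
    fun_prop
  have hint : ∀ a b : ℝ, IntervalIntegrable
      (fun z : ℝ => (min x z - x * z) * (min y z - y * z)) MeasureTheory.volume a b :=
    fun a b => hcont.intervalIntegrable a b
  have hsplit1 := intervalIntegral.integral_add_adjacent_intervals (hint 0 x) (hint x 1)
  have hsplit2 := intervalIntegral.integral_add_adjacent_intervals (hint x y) (hint y 1)
  rw [← hsplit1, ← hsplit2]
  have h1 : (∫ z in (0:ℝ)..x, (min x z - x * z) * (min y z - y * z)) =
      ∫ z in (0:ℝ)..x, (1 - x) * (1 - y) * z ^ 2 := by
    apply intervalIntegral.integral_congr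
    intro z hz
    rw [Set.uIcc_of_le hx] at hz
    have h1 : min x z = z := min_eq_right hz.2
    have h2 : min y z = z := min_eq_right (hz.2.trans hxy)
    simp only [h1, h2]; ring
  have h2 : (∫ z in x..y, (min x z - x * z) * (min y z - y * z)) =
      ∫ z in x..y, x * (1 - y) * z - x * (1 - y) * z ^ 2 := by
    apply intervalIntegral.integral_congr
    intro z hz
    rw [Set.uIcc_of_le hxy] at hz
    have h1 : min x z = x := min_eq_left hz.1
    have h2 : min y z = z := min_eq_right hz.2
    simp only [h1, h2]; ring
  have h3 : (∫ z in y..(1:ℝ), (min x z - x * z) * (min y z - y * z)) =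
      ∫ z in y..(1:ℝ), x * y * 1 - x * y * (2 * z) + x * y * z ^ 2 := by
    apply intervalIntegral.integral_congr
    intro z hz
    rw [Set.uIcc_of_le hy] at hz
    have h1 : min x z = x := min_eq_left (hxy.trans hz.1)
    have h2 : min y z = y := min_eq_left hz.1
    simp only [h1, h2]; ring
  rw [h1, h2, h3]
  rw [intervalIntegral.integral_const_mul]
  rw [intervalIntegral.integral_sub (f := fun z => x * (1 - y) * z)
    (g := fun z => x * (1 - y) * z ^ 2)
    (Continuous.intervalIntegrable (by fun_prop) x y)
    (Continuous.intervalIntegrable (by fun_prop) x y)]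
  rw [intervalIntegral.integral_add (f := fun z => x * y * 1 - x * y * (2 * z))
    (g := fun z => x * y * z ^ 2)
    (Continuous.intervalIntegrable (by fun_prop) y 1)
    (Continuous.intervalIntegrable (by fun_prop) y 1)]
  rw [intervalIntegral.integral_sub (f := fun _ => x * y * 1)
    (g := fun z => x * y * (2 * z))
    (Continuous.intervalIntegrable (by fun_prop) y 1)
    (Continuous.intervalIntegrable (by fun_prop) y 1)]
  have hid1 : (∫ z in x..y, x * (1 - y) * z) = x * (1 - y) * ((y ^ 2 - x ^ 2) / 2) := by
    rw [intervalIntegral.integral_const_mul, integral_id]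
  have hid2 : (∫ z in y..(1:ℝ), x * y * (2 * z)) = x * y * (2 * ((1 ^ 2 - y ^ 2) / 2)) := by
    rw [intervalIntegral.integral_const_mul, intervalIntegral.integral_const_mul, integral_id]
  rw [hid1, hid2]
  simp only [intervalIntegral.integral_const_mul, integral_pow,
    intervalIntegral.integral_const, smul_eq_mul]
  push_cast
  ring
end

section
/- For every θ > 0 and all x, y ∈ ℝ, the integral-type Gaussian kernel satisfies π^{−1/2} ∫_ℝ exp(−θ²(x−z)² − θ²(y−z)² − z²) dz = (2θ² + 1)^{−1/2} · exp(−((θ⁴ + θ²)/(2θ² + 1))·(x − y)² − (2θ²/(2θ² + 1))·x·y). -/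
/-!
Expanding the exponent, `−θ²(x−z)² − θ²(y−z)² − z²` is a quadratic polynomial in `z` with leading
coefficient `−(2θ²+1)`. Completing the square reduces the integral to the Gaussian integral
`∫ exp(−a z²) dz = √(π/a)`, and the constant term left over by the completion is the exponent on
the right-hand side.
-/

open MeasureTheory Real

theorem integral_exp_quadratic {a : ℝ} (ha : a ≠ 0) (b c : ℝ) :
    ∫ z : ℝ, exp (-a * z ^ 2 + b * z + c) = √(π / a) * exp (b ^ 2 / (4 * a) + c) := by
  have complete_square : ∀ z : ℝ, exp (-a * z ^ 2 + b * z + c) =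
      exp (-a * (z - b / (2 * a)) ^ 2) * exp (b ^ 2 / (4 * a) + c) := fun z => by
    rw [← exp_add]
    congr 1
    field_simp
    ring
  simp_rw [complete_square, integral_mul_const,
    integral_sub_right_eq_self (fun z => exp (-a * z ^ 2)), integral_gaussian]

theorem rpow_neg_half_mul_sqrt_div {p a : ℝ} (hp : 0 < p) (ha : 0 ≤ a) :
    p ^ (-(1 : ℝ) / 2) * √(p / a) = a ^ (-(1 : ℝ) / 2) := by
  rw [sqrt_eq_rpow, div_rpow hp.le ha, mul_div_assoc', ← rpow_add hp]
  norm_num [rpow_neg ha]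

theorem stmt11_general (θ : ℝ) (x y : ℝ) :
    Real.pi ^ (-(1 : ℝ) / 2) *
        ∫ z : ℝ, Real.exp (-θ ^ 2 * (x - z) ^ 2 - θ ^ 2 * (y - z) ^ 2 - z ^ 2) =
      (2 * θ ^ 2 + 1) ^ (-(1 : ℝ) / 2) *
        Real.exp (-((θ ^ 4 + θ ^ 2) / (2 * θ ^ 2 + 1)) * (x - y) ^ 2 -
          (2 * θ ^ 2 / (2 * θ ^ 2 + 1)) * (x * y)) := by
  have ha : 0 < 2 * θ ^ 2 + 1 := by positivity
  have expand : ∀ z : ℝ, -θ ^ 2 * (x - z) ^ 2 - θ ^ 2 * (y - z) ^ 2 - z ^ 2 =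
      -(2 * θ ^ 2 + 1) * z ^ 2 + 2 * θ ^ 2 * (x + y) * z + -θ ^ 2 * (x ^ 2 + y ^ 2) :=
    fun z => by ring
  simp_rw [expand, integral_exp_quadratic ha.ne', ← mul_assoc,
    rpow_neg_half_mul_sqrt_div pi_pos ha.le]
  congr 2
  field_simp
  ring

/-- **Explicit form of the integral-type Gaussian kernel.** For every `θ > 0` and
all `x, y ∈ ℝ`,
`π^{−1/2} ∫_ℝ exp(−θ²(x−z)² − θ²(y−z)² − z²) dz
  = (2θ²+1)^{−1/2} exp(−((θ⁴+θ²)/(2θ²+1))(x−y)² − (2θ²/(2θ²+1)) x y)`. -/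
theorem stmt11 (θ : ℝ) (hθ : 0 < θ) (x y : ℝ) :
    Real.pi ^ (-(1 : ℝ) / 2) *
        ∫ z : ℝ, Real.exp (-θ ^ 2 * (x - z) ^ 2 - θ ^ 2 * (y - z) ^ 2 - z ^ 2) =
      (2 * θ ^ 2 + 1) ^ (-(1 : ℝ) / 2) *
        Real.exp (-((θ ^ 4 + θ ^ 2) / (2 * θ ^ 2 + 1)) * (x - y) ^ 2 -
          (2 * θ ^ 2 / (2 * θ ^ 2 + 1)) * (x * y)) :=
  stmt11_general θ x y
end

section
/- Let d ∈ ℕ and θ = (θ₁,…,θ_d) with each θ_k > 0. For a multi-index n = (n₁,…,n_d) ∈ ℕ₀^d define φ̃_{θ,n}(x) := ∏_{k=1}^d (2^{n_k}/n_k!)^{1/2} (θ_k x_k)^{n_k} e^{−θ_k² x_k²} for x ∈ ℝ^d. Then for every τ ∈ (0,1) and every x ∈ ℝ^d the family (φ̃_{θ,n}(x))_{n∈ℕ₀^d} is absolutely summable and ∑_{n∈ℕ₀^d} |φ̃_{θ,n}(x)| ≤ ∏_{k=1}^d (1 − τ²)^{−1} e^{(2τ^{−2} − 1)θ_k² x_k²}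 < ∞. In particular the expansion functions of the d-dimensional Gaussian kernel G_θ(x,y) = e^{−∑_k θ_k²(x_k−y_k)²} = ∑_{n∈ℕ₀^d} φ̃_{θ,n}(x)φ̃_{θ,n}(y) satisfy condition (C-1*) on any subset of ℝ^d. -/
/-!
The family factorizes over the coordinates, so for nonnegative terms the sum over `ℕ₀^d` is the
product of `d` one-dimensional sums. In one dimension, write `2t² = τ² · (2t²/τ²)` and bound the
geometric mean of `τ^{2m}` and `(2t²/τ²)^m / m!` by their arithmetic mean: the sum is then at most
`((1 - τ²)⁻¹ + e^{2t²/τ²}) / 2 · e^{-t²}`, and `(a + b)/2 ≤ ab` for `a, b ≥ 1`.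
-/

open Real

theorem hasSum_fin_pi_prod {β : Type*} {d : ℕ} (f : Fin d → β → ℝ) (S : Fin d → ℝ)
    (hf : ∀ k b, 0 ≤ f k b) (h : ∀ k, HasSum (f k) (S k)) :
    HasSum (fun n : Fin d → β => ∏ k, f k (n k)) (∏ k, S k) := by
  induction d with
  | zero =>
    simpa only [Finset.univ_eq_empty, Finset.prod_empty] using
      hasSum_single (f := fun _ : Fin 0 → β => (1 : ℝ)) default
        fun n hn => absurd (Subsingleton.elim n default) hn
  | succ d ih =>
    have htail := ih (fun k => f k.succ) (fun k => S k.succ) (fun k => hf k.succ)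
      fun k => h k.succ
    have hprod :
        Summable fun p : β × (Fin d → β) => f 0 p.1 * ∏ k : Fin d, f k.succ (p.2 k) := by
      apply (h 0).summable.mul_of_nonneg htail.summable (hf 0)
      exact fun n => Finset.prod_nonneg fun k _ => hf k.succ (n k)
    have hmul := (h 0).mul htail hprod
    rw [Fin.prod_univ_succ, ← (Fin.consEquiv fun _ => β).hasSum_iff]
    have hcons : (fun n : Fin (d + 1) → β => ∏ k, f k (n k)) ∘ Fin.consEquiv (fun _ => β) =
        fun p => f 0 p.1 * ∏ k : Fin d, f k.succ (p.2 k) := by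
      ext p
      simp [Fin.consEquiv, Fin.prod_univ_succ]
    rwa [hcons]

/-- `φ̃_{θ,n}(x) = ∏ k, gaussExpansionFun (n k) (θ k * x k)`. -/
noncomputable def gaussExpansionFun (m : ℕ) (t : ℝ) : ℝ :=
  √((2 : ℝ) ^ m / m.factorial) * t ^ m * exp (-t ^ 2)

theorem sqrt_two_pow_div_factorial_mul_le {s : ℝ} (hs : 0 < s) (m : ℕ) (t : ℝ) :
    √((2 : ℝ) ^ m / m.factorial) * |t| ^ m ≤ (s ^ m + (2 * t ^ 2 / s) ^ m / m.factorial) / 2 := by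
  have hsplit : √((2 : ℝ) ^ m / m.factorial) * |t| ^ m =
      √(s ^ m) * √((2 * t ^ 2 / s) ^ m / m.factorial) := by
    rw [← Real.sqrt_mul (by positivity), ← Real.sqrt_sq (by positivity : 0 ≤ |t| ^ m),
      ← Real.sqrt_mul (by positivity), mul_div_assoc', ← mul_pow, mul_div_cancel₀ _ hs.ne',
      ← pow_mul, pow_mul', sq_abs, mul_pow, div_mul_eq_mul_div]
  rw [hsplit]
  nlinarith [two_mul_le_add_sq (√(s ^ m)) (√((2 * t ^ 2 / s) ^ m / m.factorial)),
    Real.sq_sqrt (by positivity : (0 : ℝ) ≤ s ^ m),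
    Real.sq_sqrt (by positivity : (0 : ℝ) ≤ (2 * t ^ 2 / s) ^ m / m.factorial)]

theorem abs_gaussExpansionFun_le {s : ℝ} (hs : 0 < s) (m : ℕ) (t : ℝ) :
    |gaussExpansionFun m t| ≤
      (s ^ m + (2 * t ^ 2 / s) ^ m / m.factorial) / 2 * exp (-t ^ 2) := by
  rw [gaussExpansionFun, abs_mul, abs_mul, abs_pow, abs_of_nonneg (Real.sqrt_nonneg _),
    Real.abs_exp]
  gcongr
  exact sqrt_two_pow_div_factorial_mul_le hs m t

theorem hasSum_gaussExpansionFun_majorant {s : ℝ} (hs0 : 0 < s) (hs1 : s < 1) (t : ℝ) :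
    HasSum (fun m : ℕ => (s ^ m + (2 * t ^ 2 / s) ^ m / m.factorial) / 2 * exp (-t ^ 2))
      (((1 - s)⁻¹ + exp (2 * t ^ 2 / s)) / 2 * exp (-t ^ 2)) := by
  have hgeom := hasSum_geometric_of_lt_one hs0.le hs1
  have hexp : HasSum (fun m : ℕ => (2 * t ^ 2 / s) ^ m / m.factorial) (exp (2 * t ^ 2 / s)) := by
    rw [Real.exp_eq_exp_ℝ]
    exact NormedSpace.expSeries_div_hasSum_exp _
  exact ((hgeom.add hexp).div_const 2).mul_right _

theorem summable_abs_gaussExpansionFun (t : ℝ) :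
    Summable fun m : ℕ => |gaussExpansionFun m t| :=
  (hasSum_gaussExpansionFun_majorant one_half_pos one_half_lt_one t).summable.of_nonneg_of_le
    (fun _ => abs_nonneg _) (abs_gaussExpansionFun_le one_half_pos · t)

theorem tsum_abs_gaussExpansionFun_le {s : ℝ} (hs0 : 0 < s) (hs1 : s < 1) (t : ℝ) :
    ∑' m : ℕ, |gaussExpansionFun m t| ≤ (1 - s)⁻¹ * exp ((2 / s - 1) * t ^ 2) := by
  have hmajorant := hasSum_gaussExpansionFun_majorant hs0 hs1 t
  have hgeom_ge : 1 ≤ (1 - s)⁻¹ := one_le_inv₀ (by linarith) |>.mpr (by linarith)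
  have hexp_ge : 1 ≤ exp (2 * t ^ 2 / s) := Real.one_le_exp (by positivity)
  calc ∑' m : ℕ, |gaussExpansionFun m t|
      ≤ ((1 - s)⁻¹ + exp (2 * t ^ 2 / s)) / 2 * exp (-t ^ 2) :=
        hmajorant.tsum_eq ▸ (summable_abs_gaussExpansionFun t).tsum_le_tsum
          (abs_gaussExpansionFun_le hs0 · t) hmajorant.summable
    _ ≤ (1 - s)⁻¹ * exp (2 * t ^ 2 / s) * exp (-t ^ 2) := by gcongr; nlinarith
    _ = (1 - s)⁻¹ * exp ((2 / s - 1) * t ^ 2) := by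
        rw [mul_assoc, ← Real.exp_add]
        congr 2
        ring

theorem stmt13_general (d : ℕ) (θ : Fin d → ℝ)
    (τ : ℝ) (hτ0 : 0 < τ) (hτ1 : τ < 1) (x : Fin d → ℝ) :
    (Summable fun n : Fin d → ℕ =>
      |∏ k, (Real.sqrt ((2 : ℝ) ^ (n k) / (Nat.factorial (n k) : ℝ)) *
        (θ k * x k) ^ (n k) * Real.exp (-(θ k) ^ 2 * (x k) ^ 2))|) ∧
    ∑' n : Fin d → ℕ,
        |∏ k, (Real.sqrt ((2 : ℝ) ^ (n k) / (Nat.factorial (n k) : ℝ)) *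
          (θ k * x k) ^ (n k) * Real.exp (-(θ k) ^ 2 * (x k) ^ 2))| ≤
      ∏ k, (1 - τ ^ 2)⁻¹ * Real.exp ((2 / τ ^ 2 - 1) * (θ k) ^ 2 * (x k) ^ 2) := by
  have hterm : ∀ n : Fin d → ℕ,
      |∏ k, (√((2 : ℝ) ^ (n k) / (n k).factorial) * (θ k * x k) ^ (n k) *
        exp (-(θ k) ^ 2 * (x k) ^ 2))| = ∏ k, |gaussExpansionFun (n k) (θ k * x k)| := by
    intro n
    simp only [Finset.abs_prod, gaussExpansionFun, mul_pow, neg_mul]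
  have hτ2 : τ ^ 2 < 1 := by nlinarith
  have hsum := hasSum_fin_pi_prod (fun k m => |gaussExpansionFun m (θ k * x k)|) _
    (fun _ _ => abs_nonneg _) fun k => (summable_abs_gaussExpansionFun (θ k * x k)).hasSum
  simp only [hterm]
  refine ⟨hsum.summable, hsum.tsum_eq ▸ Finset.prod_le_prod (fun k _ => tsum_nonneg
    fun _ => abs_nonneg _) fun k _ => ?_⟩
  simpa only [mul_pow, mul_assoc] using
    tsum_abs_gaussExpansionFun_le (by positivity) hτ2 (θ k * x k)

/-- **The expansion functions of the d-dimensional Gaussian kernel satisfy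
condition (C-1*).** For shape parameters `θ_k > 0` and the expansion functions
`φ̃_{θ,n}(x) = ∏_k (2^{n_k}/n_k!)^{1/2} (θ_k x_k)^{n_k} e^{−θ_k² x_k²}`, indexed
by multi-indices `n ∈ ℕ₀^d`, for every `τ ∈ (0,1)` and every `x ∈ ℝ^d` the family
is absolutely summable and
`∑_{n∈ℕ₀^d} |φ̃_{θ,n}(x)| ≤ ∏_k (1 − τ²)⁻¹ e^{(2τ^{−2} − 1) θ_k² x_k²}`. -/
theorem stmt13 (d : ℕ) (θ : Fin d → ℝ) (hθ : ∀ k, 0 < θ k)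
    (τ : ℝ) (hτ0 : 0 < τ) (hτ1 : τ < 1) (x : Fin d → ℝ) :
    (Summable fun n : Fin d → ℕ =>
      |∏ k, (Real.sqrt ((2 : ℝ) ^ (n k) / (Nat.factorial (n k) : ℝ)) *
        (θ k * x k) ^ (n k) * Real.exp (-(θ k) ^ 2 * (x k) ^ 2))|) ∧
    ∑' n : Fin d → ℕ,
        |∏ k, (Real.sqrt ((2 : ℝ) ^ (n k) / (Nat.factorial (n k) : ℝ)) *
          (θ k * x k) ^ (n k) * Real.exp (-(θ k) ^ 2 * (x k) ^ 2))| ≤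
      ∏ k, (1 - τ ^ 2)⁻¹ * Real.exp ((2 / τ ^ 2 - 1) * (θ k) ^ 2 * (x k) ^ 2) :=
  stmt13_general d θ τ hτ0 hτ1 x
end
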